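/- arXiv:1909.08226 — 9 statements merged into one kernel-verified Lean document; each statement's English description precedes it below -/
import Mathlib

section
/- Let φ ∈ (0,1) and ω = e^{2πiφ}. Then the complex number μ = ω((1 − 2ω + ω²) − i(1 − ω + ω²))/(1 − 2ω + 2ω²) satisfies |μ| = 1. (This is the square λ² of the eigenvalues of the Wojcik model in the case β = iα, showing that they lie on the unit circle S¹.) -/
/-!
On the unit circle, `1 - 2ω + 2ω²` and the numerator of `μ` have the common factor
`2ω - (1 - i)`; after cancelling it `μ = ω · ((1 - i)ω - 2) / (2ω - (1 + i))`, and the last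
quotient is a Blaschke factor: `(1 - i)ω - 2` is `conj(1 + i) ω - conj 2`, whose modulus on
`|ω| = 1` equals that of `2ω - (1 + i)`.
-/

open Complex ComplexConjugate

theorem norm_conj_mul_sub_conj {ω : ℂ} (hω : ‖ω‖ = 1) (b c : ℂ) :
    ‖conj b * ω - conj c‖ = ‖c * ω - b‖ := by
  have hωω : ω * conj ω = 1 := by
    rw [mul_conj, normSq_eq_norm_sq, hω]; norm_num
  calc ‖conj b * ω - conj c‖ = ‖ω * (b * conj ω - c)‖ := by
        rw [norm_mul, hω, one_mul, ← norm_conj]; simp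
    _ = ‖b - c * ω‖ := by congr 1; linear_combination b * hωω
    _ = ‖c * ω - b‖ := norm_sub_rev _ _

theorem two_mul_sub_ne_zero {ω z : ℂ} (hω : ‖ω‖ = 1) (hz : ‖z‖ ^ 2 ≠ 4) :
    2 * ω - z ≠ 0 := by
  intro h
  rw [← eq_of_sub_eq_zero h, norm_mul, hω] at hz
  norm_num at hz

theorem sq_norm_one_add_I : ‖1 + I‖ ^ 2 = 2 := by
  rw [Complex.sq_norm, normSq_apply]; norm_num

theorem sq_norm_one_sub_I : ‖1 - I‖ ^ 2 = 2 := by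
  rw [Complex.sq_norm, normSq_apply]; norm_num

theorem norm_one_sub_I_mul_sub_two {ω : ℂ} (hω : ‖ω‖ = 1) :
    ‖(1 - I) * ω - 2‖ = ‖2 * ω - (1 + I)‖ := by
  have h := norm_conj_mul_sub_conj hω (1 + I) 2
  rwa [map_add, map_one, conj_I, ← sub_eq_add_neg, map_ofNat] at h

theorem stmt_2_general (φ : ℝ)
    (ω : ℂ) (hω : ω = Complex.exp (2 * Real.pi * Complex.I * (φ : ℂ)))
    (μ : ℂ)
    (hμ : μ = ω * ((1 - 2 * ω + ω ^ 2) - Complex.I * (1 - ω + ω ^ 2)) /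
      (1 - 2 * ω + 2 * ω ^ 2)) :
    ‖μ‖ = 1 := by
  have hω1 : ‖ω‖ = 1 := by
    rw [hω, show 2 * Real.pi * I * φ = ((2 * Real.pi * φ : ℝ) : ℂ) * I by push_cast; ring]
    exact norm_exp_ofReal_mul_I _
  have hB : 2 * ω - (1 + I) ≠ 0 := two_mul_sub_ne_zero hω1 (by norm_num [sq_norm_one_add_I])
  have hC : 2 * ω - (1 - I) ≠ 0 := two_mul_sub_ne_zero hω1 (by norm_num [sq_norm_one_sub_I])
  have hnum : 2 * (1 - 2 * ω + ω ^ 2 - I * (1 - ω + ω ^ 2))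
      = ((1 - I) * ω - 2) * (2 * ω - (1 - I)) := by
    linear_combination ω * I_sq
  have hden : 2 * (1 - 2 * ω + 2 * ω ^ 2) = (2 * ω - (1 + I)) * (2 * ω - (1 - I)) := by
    linear_combination I_sq
  have hμ' : μ = ω * (((1 - I) * ω - 2) / (2 * ω - (1 + I))) := by
    rw [hμ, mul_div_assoc, ← mul_div_mul_left _ _ two_ne_zero, hnum, hden,
      mul_div_mul_right _ _ hC]
  rw [hμ', norm_mul, norm_div, hω1, norm_one_sub_I_mul_sub_two hω1,
    div_self (norm_ne_zero_iff.mpr hB), one_mul]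

/-- For `φ ∈ (0,1)` and `ω = e^{2πiφ}`, the squared eigenvalue of the Wojcik
model in the case `β = iα` lies on the unit circle. -/
theorem stmt_2 (φ : ℝ) (hφ : φ ∈ Set.Ioo (0 : ℝ) 1)
    (ω : ℂ) (hω : ω = Complex.exp (2 * Real.pi * Complex.I * (φ : ℂ)))
    (μ : ℂ)
    (hμ : μ = ω * ((1 - 2 * ω + ω ^ 2) - Complex.I * (1 - ω + ω ^ 2)) /
      (1 - 2 * ω + 2 * ω ^ 2)) :
    ‖μ‖ = 1 :=
  stmt_2_general φ ω hω μ hμ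
end

section
/- Let φ ∈ (0,1) and ω = e^{2πiφ}. Then the complex number μ = ω((1 − 2ω + ω²) + i(1 − ω + ω²))/(1 − 2ω + 2ω²) satisfies |μ| = 1. (This is the square λ² of the eigenvalues of the Wojcik model in the case β = −iα, showing that they lie on the unit circle S¹.) -/
open Complex

/-!
Write `ω = x + iy` with `x² + y² = 1`. Dividing by `ω` turns the numerator
`(1 - 2ω + ω²) + i(1 - ω + ω²)` into `(2x - 2) + i(2x - 1)` and the denominator
`1 - 2ω + 2ω²` into `(3x - 2) + iy`; both have squared modulus
`8x² - 12x + 5 = 8(x - 3/4)² + 1/2 > 0`. So the quotient is unimodular, and so is `μ`.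
-/

section UnitCircle

variable {ω : ℂ} (hω : normSq ω = 1)
include hω

theorem normSq_wojcik_denominator :
    normSq (1 - 2 * ω + 2 * ω ^ 2) = 8 * ω.re ^ 2 - 12 * ω.re + 5 := by
  rw [normSq_apply] at hω
  simp only [normSq_apply, sub_re, sub_im, add_re, add_im, mul_re, mul_im, pow_two,
    one_re, one_im, re_ofNat, im_ofNat]
  grind

theorem normSq_wojcik_numerator :
    normSq ((1 - 2 * ω + ω ^ 2) + I * (1 - ω + ω ^ 2)) = 8 * ω.re ^ 2 - 12 * ω.re + 5 := by
  rw [normSq_apply] at hω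
  simp only [normSq_apply, sub_re, sub_im, add_re, add_im, mul_re, mul_im, pow_two,
    one_re, one_im, re_ofNat, im_ofNat, I_re, I_im]
  grind

theorem wojcik_denominator_ne_zero : 1 - 2 * ω + 2 * ω ^ 2 ≠ 0 := by
  rw [← normSq_pos, normSq_wojcik_denominator hω]
  nlinarith [sq_nonneg (ω.re - 3 / 4)]

theorem norm_wojcik_numerator_eq_norm_denominator :
    ‖(1 - 2 * ω + ω ^ 2) + I * (1 - ω + ω ^ 2)‖ = ‖1 - 2 * ω + 2 * ω ^ 2‖ := by
  rw [norm_def, norm_def, normSq_wojcik_numerator hω, normSq_wojcik_denominator hω]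

end UnitCircle

theorem stmt_3_general (φ : ℝ)
    (ω : ℂ) (hω : ω = Complex.exp (2 * Real.pi * Complex.I * (φ : ℂ)))
    (μ : ℂ)
    (hμ : μ = ω * ((1 - 2 * ω + ω ^ 2) + Complex.I * (1 - ω + ω ^ 2)) /
      (1 - 2 * ω + 2 * ω ^ 2)) :
    ‖μ‖ = 1 := by
  have hω_norm : ‖ω‖ = 1 := by
    have hexponent : 2 * Real.pi * I * φ = ((2 * Real.pi * φ : ℝ) : ℂ) * I := by
      push_cast
      ring
    rw [hω, hexponent, norm_exp_ofReal_mul_I]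
  have hω_normSq : normSq ω = 1 := by rw [normSq_eq_norm_sq, hω_norm, one_pow]
  rw [hμ, norm_div, norm_mul, hω_norm, one_mul,
    norm_wojcik_numerator_eq_norm_denominator hω_normSq,
    div_self (norm_ne_zero_iff.mpr (wojcik_denominator_ne_zero hω_normSq))]

/-- For `φ ∈ (0,1)` and `ω = e^{2πiφ}`, the squared eigenvalue of the Wojcik
model in the case `β = -iα` lies on the unit circle. -/
theorem stmt_3 (φ : ℝ) (hφ : φ ∈ Set.Ioo (0 : ℝ) 1)
    (ω : ℂ) (hω : ω = Complex.exp (2 * Real.pi * Complex.I * (φ : ℂ)))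
    (μ : ℂ)
    (hμ : μ = ω * ((1 - 2 * ω + ω ^ 2) + Complex.I * (1 - ω + ω ^ 2)) /
      (1 - 2 * ω + 2 * ω ^ 2)) :
    ‖μ‖ = 1 :=
  stmt_3_general φ ω hω μ hμ
end

section
/- Let φ ∈ (1/4, 1) and ω = e^{2πiφ}. Then μ = ω((1 − 2ω + ω²) − i(1 − ω + ω²))/(1 − 2ω + 2ω²) satisfies Re(μ) < 0. Consequently every λ ∈ ℂ with λ² = μ satisfies |λ| = 1 and |Im λ| > 1/√2; that is, the eigenvalues λ^(1)(φ) and λ^(2)(φ) of the Wojcik model (case β = iα) do not lie on the continuous spectrum σ(H) of the Hadamard walk. -/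
/-!
Write `ω = c + s i` with `c² + s² = 1`. Numerator and denominator of `μ` both have squared
modulus `8c² - 12c + 5 > 0`, so `|μ| = |ω| = 1`, and
`Re μ = (c - 1)((2c + s - 1)² + c²) / (8c² - 12c + 5)`,
which is negative unless `c = 1` or `(c, s) = (0, 1)`, i.e. unless `ω = 1` or `ω = i`; neither
happens for `φ ∈ (1/4, 1)`. A square root `λ` of `μ` then lies on the unit circle and
`Re λ² = (Re λ)² - (Im λ)² < 0` forces `(Im λ)² > 1/2`.
-/

open Complex

namespace Complex

lemma re_sq_add_im_sq_of_norm_eq_one {z : ℂ} (hz : ‖z‖ = 1) : z.re ^ 2 + z.im ^ 2 = 1 := by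
  rw [sq, sq, ← normSq_apply, ← Complex.sq_norm, hz, one_pow]

lemma exp_two_pi_mul_I_mul_ne_one {x : ℝ} (h0 : 0 < x) (h1 : x < 1) :
    exp (2 * Real.pi * I * x) ≠ 1 := by
  rw [Ne, exp_eq_one_iff]
  rintro ⟨n, hn⟩
  have hxn : x = n := by
    exact_mod_cast mul_left_cancel₀ two_pi_I_ne_zero (hn.trans (mul_comm _ _))
  have h0' : (0 : ℤ) < n := by exact_mod_cast hxn ▸ h0
  have h1' : n < (1 : ℤ) := by exact_mod_cast hxn ▸ h1
  omega

lemma exp_two_pi_mul_I_mul_ne_I {x : ℝ} (h0 : 1 / 4 < x) (h1 : x < 5 / 4) :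
    exp (2 * Real.pi * I * x) ≠ I := by
  intro h
  apply exp_two_pi_mul_I_mul_ne_one (x := x - 1 / 4) (by linarith) (by linarith)
  have hquarter : 2 * Real.pi * I * ((1 / 4 : ℝ) : ℂ) = Real.pi / 2 * I := by push_cast; ring
  rw [ofReal_sub, mul_sub, exp_sub, hquarter, exp_pi_div_two_mul_I, h, div_self I_ne_zero]

lemma one_div_sqrt_two_lt_abs_im {z : ℂ} (hz : ‖z‖ = 1) (hre : (z ^ 2).re < 0) :
    1 / Real.sqrt 2 < |z.im| := by
  have hcs := re_sq_add_im_sq_of_norm_eq_one hz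
  have him : 1 / 2 < z.im ^ 2 := by
    rw [sq z, mul_re] at hre
    nlinarith
  calc 1 / Real.sqrt 2 = Real.sqrt (1 / 2) := by rw [one_div, one_div, Real.sqrt_inv]
    _ < Real.sqrt (z.im ^ 2) := Real.sqrt_lt_sqrt (by norm_num) him
    _ = |z.im| := Real.sqrt_sq_eq_abs _

end Complex

namespace Wojcik

noncomputable def mu (ω : ℂ) : ℂ :=
  ω * ((1 - 2 * ω + ω ^ 2) - I * (1 - ω + ω ^ 2)) / (1 - 2 * ω + 2 * ω ^ 2)

section UnitCircle

variable {ω : ℂ}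

lemma normSq_mu_numerator (hω : ‖ω‖ = 1) :
    normSq ((1 - 2 * ω + ω ^ 2) - I * (1 - ω + ω ^ 2)) = 8 * ω.re ^ 2 - 12 * ω.re + 5 := by
  have hcs := re_sq_add_im_sq_of_norm_eq_one hω
  simp only [normSq_apply, sub_re, sub_im, add_re, add_im, mul_re, mul_im, sq, one_re, one_im,
    I_re, I_im, re_ofNat, im_ofNat]
  linear_combination (3 - 2 * ω.im + 2 * ω.im ^ 2 - 6 * ω.re + 2 * ω.re ^ 2) * hcs

lemma normSq_mu_denominator (hω : ‖ω‖ = 1) :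
    normSq (1 - 2 * ω + 2 * ω ^ 2) = 8 * ω.re ^ 2 - 12 * ω.re + 5 := by
  have hcs := re_sq_add_im_sq_of_norm_eq_one hω
  simp only [normSq_apply, sub_re, sub_im, add_re, add_im, mul_re, mul_im, sq, one_re, one_im,
    re_ofNat, im_ofNat]
  linear_combination (4 + 4 * ω.im ^ 2 - 8 * ω.re + 4 * ω.re ^ 2) * hcs

lemma eight_mul_sq_sub_twelve_mul_add_five_pos (x : ℝ) : 0 < 8 * x ^ 2 - 12 * x + 5 := by
  nlinarith [sq_nonneg (4 * x - 3)]

theorem norm_mu (hω : ‖ω‖ = 1) : ‖mu ω‖ = 1 := by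
  have h : normSq (mu ω) = 1 := by
    rw [mu, normSq_div, normSq_mul, ← Complex.sq_norm ω, hω, one_pow, one_mul,
      normSq_mu_numerator hω, normSq_mu_denominator hω,
      div_self (eight_mul_sq_sub_twelve_mul_add_five_pos _).ne']
  rw [norm_def, h, Real.sqrt_one]

theorem mu_re (hω : ‖ω‖ = 1) :
    (mu ω).re =
      (ω.re - 1) * ((2 * ω.re + ω.im - 1) ^ 2 + ω.re ^ 2) / (8 * ω.re ^ 2 - 12 * ω.re + 5) := by
  have hcs := re_sq_add_im_sq_of_norm_eq_one hω
  rw [mu, div_re, normSq_mu_denominator hω, ← add_div]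
  congr 1
  simp only [sub_re, sub_im, add_re, add_im, mul_re, mul_im, sq, one_re, one_im,
    I_re, I_im, re_ofNat, im_ofNat]
  linear_combination (-1 + ω.im - 2 * ω.im ^ 2 + 2 * ω.im ^ 3 + 4 * ω.re - 4 * ω.re * ω.im
    + 2 * ω.re * ω.im ^ 2 - 6 * ω.re ^ 2 + 2 * ω.re ^ 2 * ω.im + 2 * ω.re ^ 3) * hcs

theorem mu_re_neg (hω : ‖ω‖ = 1) (h1 : ω ≠ 1) (hI : ω ≠ I) : (mu ω).re < 0 := by
  have hcs := re_sq_add_im_sq_of_norm_eq_one hω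
  have hre : ω.re < 1 := by
    refine lt_of_le_of_ne (by nlinarith [sq_nonneg ω.im]) fun h => h1 (Complex.ext h ?_)
    simpa [h] using hcs
  have hpos : 0 < (2 * ω.re + ω.im - 1) ^ 2 + ω.re ^ 2 := by
    refine lt_of_le_of_ne (by positivity) fun h => hI (Complex.ext ?_ ?_) <;>
    · simp only [I_re, I_im]
      nlinarith [sq_nonneg (2 * ω.re + ω.im - 1), sq_nonneg ω.re]
  rw [mu_re hω]
  exact div_neg_of_neg_of_pos (mul_neg_of_neg_of_pos (by linarith) hpos)
    (eight_mul_sq_sub_twelve_mul_add_five_pos _)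

end UnitCircle

end Wojcik

/-- For `φ ∈ (1/4, 1)`, the squared eigenvalue `μ` of the Wojcik model
(case `β = iα`) has negative real part; consequently every square root `λ`
of `μ` has `|λ| = 1` and `|Im λ| > 1/√2`, i.e. the eigenvalues do not lie on
the continuous spectrum `σ(H)` of the Hadamard walk. -/
theorem stmt_5 (φ : ℝ) (hφ : φ ∈ Set.Ioo (1 / 4 : ℝ) 1)
    (ω : ℂ) (hω : ω = Complex.exp (2 * Real.pi * Complex.I * (φ : ℂ)))
    (μ : ℂ)
    (hμ : μ = ω * ((1 - 2 * ω + ω ^ 2) - Complex.I * (1 - ω + ω ^ 2)) /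
      (1 - 2 * ω + 2 * ω ^ 2)) :
    μ.re < 0 ∧ ∀ l : ℂ, l ^ 2 = μ →
      ‖l‖ = 1 ∧ |l.im| > 1 / Real.sqrt 2 := by
  obtain ⟨hφ0, hφ1⟩ := hφ
  have hω_norm : ‖ω‖ = 1 := by
    rw [hω, show 2 * Real.pi * I * (φ : ℂ) = ((2 * Real.pi * φ : ℝ) : ℂ) * I by push_cast; ring]
    exact norm_exp_ofReal_mul_I _
  have hω_ne_one : ω ≠ 1 := hω ▸ exp_two_pi_mul_I_mul_ne_one (by linarith) hφ1
  have hω_ne_I : ω ≠ I := hω ▸ exp_two_pi_mul_I_mul_ne_I hφ0 (by linarith)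
  have hμ_re : μ.re < 0 := hμ ▸ Wojcik.mu_re_neg hω_norm hω_ne_one hω_ne_I
  refine ⟨hμ_re, fun l hl => ?_⟩
  have hl_norm : ‖l‖ = 1 := by
    rw [← pow_left_inj₀ (norm_nonneg l) zero_le_one two_ne_zero, one_pow, ← norm_pow, hl, hμ]
    exact Wojcik.norm_mu hω_norm
  exact ⟨hl_norm, one_div_sqrt_two_lt_abs_im hl_norm (hl ▸ hμ_re)⟩
end

section
/- Let φ ∈ (0, 3/4) and ω = e^{2πiφ}. Then μ = ω((1 − 2ω + ω²) + i(1 − ω + ω²))/(1 − 2ω + 2ω²) satisfies Re(μ) < 0. Consequently every λ ∈ ℂ with λ² = μ satisfies |λ| = 1 and |Im λ| > 1/√2; that is, the eigenvalues λ^(3)(φ) and λ^(4)(φ) of the Wojcik model (case β = −iα) do not lie on the continuous spectrum σ(H) of the Hadamard walk. -/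
/-!
On the unit circle, `ω = c + s i`, the identity `1 + ω² = 2cω` factors `μ = ω A / B` with
`A = (2c - 2) + (2c - 1) i` and `B = 2c - 2 + ω`. Both `|A|²` and `|B|²` equal `8c² - 12c + 5 > 0`,
so `|μ| = 1`, and `Re μ = 2(c - 1)(1 + s)(3 - 2c - 2s) / (8c² - 12c + 5)`, which is negative as soon
as `ω ≠ 1, -i`; this is what `φ ∈ (0, 3/4)` guarantees. A square root `λ` of `μ` is then unimodular,
and `Re λ² = 1 - 2 (Im λ)² < 0` gives `|Im λ| > 1/√2`.
-/

open Complex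

lemma Real.cos_lt_one_of_mem_Ioo {x : ℝ} (hx : x ∈ Set.Ioo 0 (2 * Real.pi)) : Real.cos x < 1 :=
  (Real.cos_le_one x).lt_of_ne fun h =>
    hx.1.ne' <| (Real.cos_eq_one_iff_of_lt_of_lt (by linarith [hx.1, Real.pi_pos]) hx.2).mp h

lemma Real.neg_one_lt_sin_of_mem_Ioo {x : ℝ} (hx : x ∈ Set.Ioo 0 (3 * Real.pi / 2)) :
    -1 < Real.sin x := by
  have := Real.cos_lt_one_of_mem_Ioo (x := x + Real.pi / 2) ⟨by linarith [hx.1, Real.pi_pos],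
    by linarith [hx.2]⟩
  rw [Real.cos_add_pi_div_two] at this
  linarith

lemma Complex.re_sq_add_im_sq_of_norm_eq_one_s6 {z : ℂ} (hz : ‖z‖ = 1) : z.re ^ 2 + z.im ^ 2 = 1 := by
  rw [← normSq_add_mul_I, re_add_im, normSq_eq_norm_sq, hz, one_pow]

lemma Complex.one_div_sqrt_two_lt_abs_im_s6 {l : ℂ} (hl : ‖l‖ = 1) (hre : (l ^ 2).re < 0) :
    1 / Real.sqrt 2 < |l.im| := by
  have hsq := re_sq_add_im_sq_of_norm_eq_one_s6 hl
  have hre' : (l ^ 2).re = l.re ^ 2 - l.im ^ 2 := by rw [pow_two, mul_re]; ring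
  rw [one_div, ← Real.sqrt_inv, ← Real.sqrt_sq_eq_abs]
  exact Real.sqrt_lt_sqrt (by positivity) (by linarith)

/-- The paper's `μ = λ²`, as a function of `ω`. -/
noncomputable def wojcikEigSq (ω : ℂ) : ℂ :=
  ω * ((1 - 2 * ω + ω ^ 2) + I * (1 - ω + ω ^ 2)) / (1 - 2 * ω + 2 * ω ^ 2)

section UnitCircle

variable {ω : ℂ}

lemma one_add_sq_eq_two_re_mul (hω : ‖ω‖ = 1) : 1 + ω ^ 2 = 2 * ω.re * ω := by
  have hconj : ω * (starRingEnd ℂ) ω = 1 := by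
    rw [mul_conj, normSq_eq_norm_sq, hω]; norm_num
  have hsum := add_conj ω
  push_cast at hsum
  linear_combination -hconj + ω * hsum

lemma wojcikEigSq_eq (hω : ‖ω‖ = 1) :
    wojcikEigSq ω = ω * ((2 * ω.re - 2) + (2 * ω.re - 1) * I) / (2 * ω.re - 2 + ω) := by
  have h := one_add_sq_eq_two_re_mul hω
  have hnum : ω * ((1 - 2 * ω + ω ^ 2) + I * (1 - ω + ω ^ 2)) =
      ω * (ω * ((2 * ω.re - 2) + (2 * ω.re - 1) * I)) := by
    linear_combination (ω + ω * I) * h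
  have hden : 1 - 2 * ω + 2 * ω ^ 2 = ω * (2 * ω.re - 2 + ω) := by
    linear_combination h
  rw [wojcikEigSq, hnum, hden, mul_div_mul_left _ _ (norm_ne_zero_iff.mp (hω ▸ one_ne_zero))]

lemma normSq_wojcik_num (ω : ℂ) :
    normSq ((2 * ω.re - 2) + (2 * ω.re - 1) * I) = 8 * ω.re ^ 2 - 12 * ω.re + 5 := by
  rw [normSq_apply]
  simp only [add_re, add_im, sub_re, sub_im, mul_re, mul_im, ofReal_re, ofReal_im, re_ofNat,
    im_ofNat, one_re, one_im, I_re, I_im]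
  ring

lemma normSq_wojcik_den (hω : ‖ω‖ = 1) :
    normSq (2 * ω.re - 2 + ω) = 8 * ω.re ^ 2 - 12 * ω.re + 5 := by
  rw [normSq_apply]
  simp only [add_re, add_im, sub_re, sub_im, mul_re, mul_im, ofReal_re, ofReal_im, re_ofNat,
    im_ofNat]
  linear_combination re_sq_add_im_sq_of_norm_eq_one_s6 hω

lemma eight_mul_sq_sub_twelve_mul_add_five_pos (c : ℝ) : 0 < 8 * c ^ 2 - 12 * c + 5 := by
  nlinarith [sq_nonneg (4 * c - 3)]

lemma norm_wojcikEigSq (hω : ‖ω‖ = 1) : ‖wojcikEigSq ω‖ = 1 := by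
  have hnorm : ‖(2 * ω.re - 2 : ℂ) + (2 * ω.re - 1) * I‖ = ‖2 * ω.re - 2 + ω‖ := by
    rw [← sq_eq_sq₀ (norm_nonneg _) (norm_nonneg _), ← normSq_eq_norm_sq,
      ← normSq_eq_norm_sq, normSq_wojcik_num, normSq_wojcik_den hω]
  have hden : (2 * ω.re - 2 + ω : ℂ) ≠ 0 :=
    normSq_pos.mp (normSq_wojcik_den hω ▸ eight_mul_sq_sub_twelve_mul_add_five_pos _)
  rw [wojcikEigSq_eq hω, norm_div, norm_mul, hω, one_mul, hnorm,
    div_self (norm_ne_zero_iff.mpr hden)]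

lemma re_wojcikEigSq (hω : ‖ω‖ = 1) :
    (wojcikEigSq ω).re = 2 * (ω.re - 1) * ((1 + ω.im) * (3 - 2 * ω.re - 2 * ω.im)) /
      (8 * ω.re ^ 2 - 12 * ω.re + 5) := by
  rw [wojcikEigSq_eq hω, div_re, normSq_wojcik_den hω, ← add_div]
  congr 1
  simp only [add_re, add_im, sub_re, sub_im, mul_re, mul_im, ofReal_re, ofReal_im, re_ofNat,
    im_ofNat, one_re, one_im, I_re, I_im]
  linear_combination (6 * ω.re - 6) * re_sq_add_im_sq_of_norm_eq_one_s6 hω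

lemma re_wojcikEigSq_neg (hω : ‖ω‖ = 1) (hre : ω.re < 1) (him : -1 < ω.im) :
    (wojcikEigSq ω).re < 0 := by
  have h := re_sq_add_im_sq_of_norm_eq_one_s6 hω
  have hfactor : 0 < 3 - 2 * ω.re - 2 * ω.im := by nlinarith [sq_nonneg (ω.re - ω.im)]
  rw [re_wojcikEigSq hω]
  refine div_neg_of_neg_of_pos ?_ (eight_mul_sq_sub_twelve_mul_add_five_pos _)
  nlinarith [mul_pos (by linarith : 0 < 1 + ω.im) hfactor]

end UnitCircle

/-- For `φ ∈ (0, 3/4)`, the squared eigenvalue `μ` of the Wojcik model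
(case `β = -iα`) has negative real part; consequently every square root `λ`
of `μ` has `|λ| = 1` and `|Im λ| > 1/√2`, i.e. the eigenvalues do not lie on
the continuous spectrum `σ(H)` of the Hadamard walk. -/
theorem stmt_6 (φ : ℝ) (hφ : φ ∈ Set.Ioo (0 : ℝ) (3 / 4))
    (ω : ℂ) (hω : ω = Complex.exp (2 * Real.pi * Complex.I * (φ : ℂ)))
    (μ : ℂ)
    (hμ : μ = ω * ((1 - 2 * ω + ω ^ 2) + Complex.I * (1 - ω + ω ^ 2)) /
      (1 - 2 * ω + 2 * ω ^ 2)) :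
    μ.re < 0 ∧ ∀ l : ℂ, l ^ 2 = μ →
      ‖l‖ = 1 ∧ |l.im| > 1 / Real.sqrt 2 := by
  set θ : ℝ := 2 * Real.pi * φ
  have hωθ : ω = exp (θ * I) := by simp only [hω, θ]; push_cast; ring_nf
  have hω1 : ‖ω‖ = 1 := hωθ ▸ norm_exp_ofReal_mul_I θ
  have hθ : θ ∈ Set.Ioo 0 (3 * Real.pi / 2) := by
    constructor <;> nlinarith [hφ.1, hφ.2, Real.pi_pos]
  have hμre : μ.re < 0 := by
    rw [hμ]
    refine re_wojcikEigSq_neg hω1 ?_ ?_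
    · rw [hωθ, exp_ofReal_mul_I_re]
      exact Real.cos_lt_one_of_mem_Ioo ⟨hθ.1, by linarith [hθ.2, Real.pi_pos]⟩
    · rw [hωθ, exp_ofReal_mul_I_im]
      exact Real.neg_one_lt_sin_of_mem_Ioo hθ
  refine ⟨hμre, fun l hl => ?_⟩
  have hl1 : ‖l‖ = 1 := by
    rw [← pow_eq_one_iff_of_nonneg (norm_nonneg l) two_ne_zero, ← norm_pow, hl, hμ]
    exact norm_wojcikEigSq hω1
  exact ⟨hl1, one_div_sqrt_two_lt_abs_im_s6 hl1 (hl ▸ hμre)⟩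
end

section
/- Let ξ ∈ (0, π/4), C = cos ξ, S = sin ξ. Then (√2 − S)/√(3 − 2√2·S) > 1/√2. Consequently each of the four numbers λ = ±(C ± (√2 − S)i)/√(3 − 2√2·S) satisfies |Im λ| > 1/√2, so the eigenvalues of the Hadamard walk with one defect do not lie on the continuous spectrum σ(H) = {z : |z| = 1, |Im z| ≤ 1/√2} of the Hadamard walk. -/
open Real Complex

/-- With `t = √2·S` the inequality squares to `3 - 2t < (2 - t)²`, i.e. `0 < (t - 1)²`. -/
theorem one_div_sqrt_two_lt_div_sqrt {S : ℝ} (hS : 2 * √2 * S < 3) (hS₁ : √2 * S ≠ 1) :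
    1 / √2 < (√2 - S) / √(3 - 2 * √2 * S) := by
  have hsq2 : √2 ^ 2 = 2 := sq_sqrt zero_le_two
  have hs2 : 0 < √2 := by positivity
  have hD : 0 < √(3 - 2 * √2 * S) := sqrt_pos.mpr (by linarith)
  have hA : 0 < (√2 - S) * √2 := by nlinarith
  have hne : 0 < (√2 * S - 1) ^ 2 := by positivity
  rw [div_lt_div_iff₀ hs2 hD, one_mul, sqrt_lt' hA]
  nlinarith

theorem sqrt_two_mul_sin_lt_one {ξ : ℝ} (h₀ : -(π / 2) ≤ ξ) (h₁ : ξ < π / 4) :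
    √2 * Real.sin ξ < 1 := by
  have hsin : Real.sin ξ < Real.sin (π / 4) :=
    strictMonoOn_sin ⟨h₀, by linarith [pi_pos]⟩ ⟨by linarith [pi_pos], by linarith [pi_pos]⟩ h₁
  rw [Real.sin_pi_div_four] at hsin
  nlinarith [sq_sqrt (zero_le_two : (0 : ℝ) ≤ 2), sqrt_nonneg 2]

theorem im_ofReal_mul_div_ofReal (e₁ e₂ c a r : ℝ) :
    ((e₁ : ℂ) * (((c : ℂ) + (e₂ : ℂ) * (a : ℂ) * I) / (r : ℂ))).im = e₁ * e₂ * (a / r) := by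
  rw [← mul_div_assoc, div_ofReal_im]
  simp only [mul_im, add_im, add_re, mul_re, ofReal_re, ofReal_im, I_re, I_im]
  ring

theorem stmt_8_general (ξ : ℝ) (hξ : ξ ∈ Set.Ioo (0 : ℝ) (Real.pi / 4))
    (C S : ℝ) (hS : S = Real.sin ξ) :
    (Real.sqrt 2 - S) / Real.sqrt (3 - 2 * Real.sqrt 2 * S) > 1 / Real.sqrt 2 ∧
      ∀ ε₁ ε₂ : ℝ, (ε₁ = 1 ∨ ε₁ = -1) → (ε₂ = 1 ∨ ε₂ = -1) →
        |(((ε₁ : ℂ) * (((C : ℂ) + ((ε₂ : ℂ) * ((Real.sqrt 2 - S : ℝ) : ℂ)) * Complex.I) /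
          ((Real.sqrt (3 - 2 * Real.sqrt 2 * S) : ℝ) : ℂ))).im)| > 1 / Real.sqrt 2 := by
  have hlt : √2 * S < 1 := hS ▸ sqrt_two_mul_sin_lt_one (by linarith [pi_pos, hξ.1]) hξ.2
  have key := one_div_sqrt_two_lt_div_sqrt (S := S) (by linarith) hlt.ne
  refine ⟨key, fun ε₁ ε₂ h₁ h₂ => ?_⟩
  have habs : ∀ ε : ℝ, (ε = 1 ∨ ε = -1) → |ε| = 1 := by
    rintro ε (rfl | rfl) <;> simp
  rw [im_ofReal_mul_div_ofReal, abs_mul, abs_mul, habs ε₁ h₁, habs ε₂ h₂, one_mul, one_mul,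
    abs_of_pos (lt_trans (by positivity) key)]
  exact key

/-- For `ξ ∈ (0, π/4)`, with `C = cos ξ`, `S = sin ξ`, one has
`(√2 - S)/√(3 - 2√2·S) > 1/√2`; consequently each of the four eigenvalues
`±(C ± (√2 - S)i)/√(3 - 2√2·S)` of the Hadamard walk with one defect has
`|Im λ| > 1/√2`, so none of them lies on the continuous spectrum
`σ(H) = {z : |z| = 1, |Im z| ≤ 1/√2}` of the Hadamard walk. -/
theorem stmt_8 (ξ : ℝ) (hξ : ξ ∈ Set.Ioo (0 : ℝ) (Real.pi / 4))
    (C S : ℝ) (hC : C = Real.cos ξ) (hS : S = Real.sin ξ) :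
    (Real.sqrt 2 - S) / Real.sqrt (3 - 2 * Real.sqrt 2 * S) > 1 / Real.sqrt 2 ∧
      ∀ ε₁ ε₂ : ℝ, (ε₁ = 1 ∨ ε₁ = -1) → (ε₂ = 1 ∨ ε₂ = -1) →
        |(((ε₁ : ℂ) * (((C : ℂ) + ((ε₂ : ℂ) * ((Real.sqrt 2 - S : ℝ) : ℂ)) * Complex.I) /
          ((Real.sqrt (3 - 2 * Real.sqrt 2 * S) : ℝ) : ℂ))).im)| > 1 / Real.sqrt 2 :=
  stmt_8_general ξ hξ C S hS
end

section
/- Let σ ∈ [0, 5π/4) ∪ (7π/4, 2π]. Then (sin σ + √2)/√(3 + 2√2·sin σ) > 1/√2; consequently the eigenvalues λ^(1)(σ) = (cos σ + (sin σ + √2)i)/√(3 + 2√2·sin σ) and λ^(2)(σ) = −λ^(1)(σ) of the two-phase quantum walk with one defect satisfy |Im λ^(j)(σ)| > 1/√2, so they do not lie on the continuous spectrum σ(H) = {z : |z| = 1, |Im z| ≤ 1/√2} of the Hadamard walk. -/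
open Real Complex

/- On the given range `s = sin σ > -√2/2 = sin (-π/4)`, and for such `s` the inequality,
once squared, reads `(√2 s + 1)² > 0`. The imaginary part of `λ⁽¹⁾(σ)` is exactly this
quotient, and `λ⁽²⁾ = -λ⁽¹⁾` has the same absolute imaginary part. -/

namespace Real

theorem neg_sqrt_two_div_two_lt_sin {t : ℝ} (ht₁ : -(π / 4) < t) (ht₂ : t < 5 * π / 4) :
    -(√2 / 2) < sin t := by
  rw [← sin_pi_div_four, ← sin_neg]
  rcases le_or_gt t (π / 2) with ht | ht
  · exact sin_lt_sin_of_lt_of_le_pi_div_two (by linarith [pi_pos]) ht ht₁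
  · rw [← sin_pi_sub t]
    exact sin_lt_sin_of_lt_of_le_pi_div_two (by linarith [pi_pos]) (by linarith) (by linarith)

theorem neg_sqrt_two_div_two_lt_sin_of_mem {σ : ℝ}
    (hσ : σ ∈ Set.Ico (0 : ℝ) (5 * π / 4) ∪ Set.Ioc (7 * π / 4) (2 * π)) :
    -(√2 / 2) < sin σ := by
  rcases hσ with ⟨h₀, h₁⟩ | ⟨h₀, h₁⟩
  · exact neg_sqrt_two_div_two_lt_sin (by linarith [pi_pos]) h₁
  · rw [← sin_sub_two_pi]
    exact neg_sqrt_two_div_two_lt_sin (by linarith) (by linarith [pi_pos])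

theorem one_div_sqrt_two_lt_div_sqrt {s : ℝ} (hs : -(√2 / 2) < s) :
    1 / √2 < (s + √2) / √(3 + 2 * √2 * s) := by
  have h2 : √2 ^ 2 = 2 := sq_sqrt (by norm_num)
  have hsqrt2 : 0 < √2 := by positivity
  have hA : 0 < 3 + 2 * √2 * s := by nlinarith
  have hsq : √(3 + 2 * √2 * s) < (s + √2) * √2 := by
    rw [sqrt_lt' (by nlinarith)]
    -- `2 (s + √2)² - (3 + 2√2 s) = (√2 s + 1)²`, and `√2 s + 1 > 0`
    nlinarith [mul_pos hsqrt2 (show 0 < s + √2 / 2 by linarith)]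
  rw [div_lt_div_iff₀ hsqrt2 (sqrt_pos.mpr hA)]
  linarith

end Real

/-- For `σ ∈ [0, 5π/4) ∪ (7π/4, 2π]`, one has
`(sin σ + √2)/√(3 + 2√2·sin σ) > 1/√2`; hence the eigenvalues
`λ⁽¹⁾(σ) = (cos σ + (sin σ + √2)i)/√(3 + 2√2·sin σ)` and `λ⁽²⁾(σ) = -λ⁽¹⁾(σ)`
of the two-phase quantum walk with one defect satisfy `|Im λ| > 1/√2`, so they
do not lie on the continuous spectrum `σ(H)` of the Hadamard walk. -/
theorem stmt_12 (σ : ℝ)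
    (hσ : σ ∈ Set.Ico (0 : ℝ) (5 * Real.pi / 4) ∪
      Set.Ioc (7 * Real.pi / 4) (2 * Real.pi))
    (l1 : ℂ)
    (hl1 : l1 = ((Real.cos σ : ℂ) + ((Real.sin σ + Real.sqrt 2 : ℝ) : ℂ) * Complex.I) /
      ((Real.sqrt (3 + 2 * Real.sqrt 2 * Real.sin σ) : ℝ) : ℂ)) :
    (Real.sin σ + Real.sqrt 2) / Real.sqrt (3 + 2 * Real.sqrt 2 * Real.sin σ) >
        1 / Real.sqrt 2 ∧
      |l1.im| > 1 / Real.sqrt 2 ∧ |(-l1).im| > 1 / Real.sqrt 2 := by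
  have key := Real.one_div_sqrt_two_lt_div_sqrt (Real.neg_sqrt_two_div_two_lt_sin_of_mem hσ)
  have him : l1.im = (Real.sin σ + √2) / √(3 + 2 * √2 * Real.sin σ) := by
    rw [hl1, div_ofReal_im]
    simp [-ofReal_add, -ofReal_sin]
  have him_abs : |l1.im| = l1.im :=
    abs_of_pos (him ▸ (by positivity : (0 : ℝ) < 1 / √2).trans key)
  refine ⟨key, ?_, ?_⟩
  · rwa [him_abs, him]
  · rwa [neg_im, abs_neg, him_abs, him]
end

section
/- Let σ ∈ [0, π/4) ∪ (3π/4, 2π]. Then (√2 − sin σ)/√(3 − 2√2·sin σ) > 1/√2; consequently the eigenvalues λ^(3)(σ) = −(cos σ + (sin σ − √2)i)/√(3 − 2√2·sin σ) and λ^(4)(σ) = −λ^(3)(σ) of the two-phase quantum walk with one defect satisfy |Im λ^(j)(σ)| > 1/√2, so they do not lie on the continuous spectrum σ(H) = {z : |z| = 1, |Im z| ≤ 1/√2} of the Hadamard walk. -/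
/-!
On the given range of `σ` one has `sin σ < √2/2`. Writing `t = √2 sin σ < 1`, the claimed bound
becomes `√(3 - 2t) < 2 - t`, and after squaring this is `0 < (t - 1)²`. The imaginary part of
`λ⁽³⁾(σ)` is exactly `(√2 - sin σ)/√(3 - 2√2 sin σ)`.
-/

open Real

lemma sin_lt_sqrt_two_div_two_of_mem {σ : ℝ}
    (hσ : σ ∈ Set.Ico 0 (π / 4) ∪ Set.Ioc (3 * π / 4) (2 * π)) :
    sin σ < √2 / 2 := by
  have hpi := pi_pos
  rw [← sin_pi_div_four]
  rcases hσ with ⟨h0, h1⟩ | ⟨h0, h1⟩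
  · exact strictMonoOn_sin ⟨by linarith, by linarith⟩ ⟨by linarith, by linarith⟩ h1
  rcases le_or_gt σ π with hle | hgt
  · rw [← sin_pi_sub σ]
    exact strictMonoOn_sin ⟨by linarith, by linarith⟩ ⟨by linarith, by linarith⟩ (by linarith)
  · calc sin σ = sin (σ - 2 * π) := (sin_sub_two_pi σ).symm
      _ ≤ 0 := sin_nonpos_of_nonpos_of_neg_pi_le (by linarith) (by linarith)
      _ < sin (π / 4) := sin_pos_of_pos_of_lt_pi (by linarith) (by linarith)

lemma one_div_sqrt_two_lt_div_sqrt_s13 {s : ℝ} (hs : s < √2 / 2) :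
    1 / √2 < (√2 - s) / √(3 - 2 * √2 * s) := by
  have h2 : √2 ^ 2 = 2 := sq_sqrt zero_le_two
  have h2pos : 0 < √2 := by positivity
  have ht : √2 * s < 1 := by nlinarith
  have hD : 0 < √(3 - 2 * √2 * s) := sqrt_pos.mpr (by linarith)
  rw [div_lt_div_iff₀ h2pos hD, one_mul]
  calc √(3 - 2 * √2 * s) < 2 - √2 * s := by
        rw [sqrt_lt' (by linarith)]
        nlinarith [mul_self_pos.mpr (sub_ne_zero.mpr ht.ne)]
    _ = (√2 - s) * √2 := by linear_combination -h2

lemma im_neg_div_ofReal (a b d : ℝ) :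
    (-((a + b * Complex.I) / (d : ℂ))).im = -b / d := by
  simp [Complex.div_ofReal_im, neg_div]

/-- For `σ ∈ [0, π/4) ∪ (3π/4, 2π]`, one has
`(√2 - sin σ)/√(3 - 2√2·sin σ) > 1/√2`; hence the eigenvalues
`λ⁽³⁾(σ) = -(cos σ + (sin σ - √2)i)/√(3 - 2√2·sin σ)` and `λ⁽⁴⁾(σ) = -λ⁽³⁾(σ)`
of the two-phase quantum walk with one defect satisfy `|Im λ| > 1/√2`, so they
do not lie on the continuous spectrum `σ(H)` of the Hadamard walk. -/
theorem stmt_13 (σ : ℝ)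
    (hσ : σ ∈ Set.Ico (0 : ℝ) (Real.pi / 4) ∪
      Set.Ioc (3 * Real.pi / 4) (2 * Real.pi))
    (l3 : ℂ)
    (hl3 : l3 = -(((Real.cos σ : ℂ) + ((Real.sin σ - Real.sqrt 2 : ℝ) : ℂ) * Complex.I) /
      ((Real.sqrt (3 - 2 * Real.sqrt 2 * Real.sin σ) : ℝ) : ℂ))) :
    (Real.sqrt 2 - Real.sin σ) / Real.sqrt (3 - 2 * Real.sqrt 2 * Real.sin σ) >
        1 / Real.sqrt 2 ∧
      |l3.im| > 1 / Real.sqrt 2 ∧ |(-l3).im| > 1 / Real.sqrt 2 := by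
  have hkey := one_div_sqrt_two_lt_div_sqrt_s13 (sin_lt_sqrt_two_div_two_of_mem hσ)
  have him : l3.im = (√2 - sin σ) / √(3 - 2 * √2 * sin σ) := by
    rw [hl3, im_neg_div_ofReal, neg_sub]
  have hpos : 0 < l3.im := him ▸ (one_div_pos.mpr (by positivity)).trans hkey
  refine ⟨hkey, ?_, ?_⟩
  · rwa [abs_of_pos hpos, him]
  · rwa [Complex.neg_im, abs_neg, abs_of_pos hpos, him]
end

section
/- Let σ₊, σ₋ ∈ ℝ and set σ̃ = (σ₊ + σ₋)/2, q = e^{−2iσ₋} + e^{−2iσ₊} − 6e^{−2iσ̃}, and r⁻ = e^{−iσ₊} − e^{−iσ₋}. Then q ≠ 0, and for every complex number w with w² = q one has −r⁻ − w ≠ 0 and −r⁻ + w ≠ 0; i.e., the denominators in the eigenvalue formulas for the complete two-phase quantum walk never vanish. -/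
open Real Complex

/-!
Writing `a = e^{-iσ₊}` and `b = e^{-iσ₋}`, one has `e^{-2iσ̃} = ab`, so `q = a² + b² - 6ab` and
`r⁻ = a - b`. Since `|a| = |b| = 1`, `|a² + b²| ≤ 2 < 6 = |6ab|`, hence `q ≠ 0`. A vanishing
denominator would force `w = ∓r⁻`, i.e. `q = (a - b)² = a² + b² - 2ab`, hence `ab = 0`.
-/

namespace Complex

lemma sq_add_sq_sub_six_mul_ne_zero {a b : ℂ} (ha : ‖a‖ = 1) (hb : ‖b‖ = 1) :
    a ^ 2 + b ^ 2 - 6 * (a * b) ≠ 0 := by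
  intro h
  have hle : ‖6 * (a * b)‖ ≤ 2 :=
    calc ‖6 * (a * b)‖ = ‖a ^ 2 + b ^ 2‖ := by rw [sub_eq_zero.mp h]
      _ ≤ ‖a ^ 2‖ + ‖b ^ 2‖ := norm_add_le _ _
      _ = 2 := by rw [norm_pow, norm_pow, ha, hb]; norm_num
  rw [norm_mul, norm_mul, ha, hb] at hle
  norm_num at hle

lemma sub_sq_ne_sq_add_sq_sub_six_mul {a b : ℂ} (ha : a ≠ 0) (hb : b ≠ 0) :
    (a - b) ^ 2 ≠ a ^ 2 + b ^ 2 - 6 * (a * b) := by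
  intro h
  exact mul_ne_zero ha hb (by linear_combination h / 4)

lemma norm_exp_neg_I_mul_ofReal (x : ℝ) : ‖exp (-I * x)‖ = 1 := by
  rw [neg_mul, ← mul_neg, ← ofReal_neg, norm_exp_I_mul_ofReal]

lemma exp_neg_two_I_mul_ofReal (x : ℝ) : exp (-2 * I * x) = exp (-I * x) ^ 2 := by
  rw [← exp_nat_mul]; ring_nf

lemma exp_neg_two_I_mul_midpoint (x y : ℝ) :
    exp (-2 * I * ((x + y) / 2 : ℝ)) = exp (-I * x) * exp (-I * y) := by
  rw [← exp_add]; push_cast; ring_nf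

end Complex

/-- For `σ₊, σ₋ ∈ ℝ` with `σ̃ = (σ₊ + σ₋)/2`,
`q = e^{-2iσ₋} + e^{-2iσ₊} - 6e^{-2iσ̃}` and `r⁻ = e^{-iσ₊} - e^{-iσ₋}`, one
has `q ≠ 0` and, for every square root `w` of `q`, `-r⁻ - w ≠ 0` and
`-r⁻ + w ≠ 0`: the denominators in the eigenvalue formulas for the complete
two-phase quantum walk never vanish. -/
theorem stmt_14 (σp σm : ℝ) (σt : ℝ) (hσt : σt = (σp + σm) / 2)
    (q rm : ℂ)
    (hq : q = Complex.exp (-2 * Complex.I * (σm : ℂ)) +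
      Complex.exp (-2 * Complex.I * (σp : ℂ)) -
      6 * Complex.exp (-2 * Complex.I * (σt : ℂ)))
    (hrm : rm = Complex.exp (-Complex.I * (σp : ℂ)) -
      Complex.exp (-Complex.I * (σm : ℂ))) :
    q ≠ 0 ∧ ∀ w : ℂ, w ^ 2 = q → -rm - w ≠ 0 ∧ -rm + w ≠ 0 := by
  set a := exp (-I * σp)
  set b := exp (-I * σm)
  have hq_ab : q = a ^ 2 + b ^ 2 - 6 * (a * b) := by
    rw [hq, hσt, exp_neg_two_I_mul_ofReal, exp_neg_two_I_mul_ofReal,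
      exp_neg_two_I_mul_midpoint]
    ring
  have hrm_sq : rm ^ 2 ≠ q := by
    rw [hrm, hq_ab]; exact sub_sq_ne_sq_add_sq_sub_six_mul (exp_ne_zero _) (exp_ne_zero _)
  refine ⟨hq_ab ▸ sq_add_sq_sub_six_mul_ne_zero (norm_exp_neg_I_mul_ofReal σp)
    (norm_exp_neg_I_mul_ofReal σm), fun w hw => ⟨fun h => ?_, fun h => ?_⟩⟩
  · exact hrm_sq (by rw [← hw, show w = -rm by linear_combination -h]; ring)
  · exact hrm_sq (by rw [← hw, show w = rm by linear_combination h])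
end

section
/- Let σ₊, σ₋ ∈ ℝ and set σ̃ = (σ₊ + σ₋)/2, p = e^{iσ₊}(e^{−2iσ₋} − e^{−2iσ₊} − 4e^{−2iσ̃}), q = e^{−2iσ₋} + e^{−2iσ₊} − 6e^{−2iσ̃}, and r⁻ = e^{−iσ₊} − e^{−iσ₋}. Then for every complex number w with w² = q, the complex number μ = (p + e^{iσ₊} r⁻ w)/(2(−r⁻ − w)) satisfies |μ| = 1. (Taking both choices of square root w of q, this shows that the squares of all four eigenvalues λ^(1), λ^(2), λ^(3), λ^(4) of the complete two-phase quantum walk lie on the unit circle, hence the eigenvalues themselves lie on S¹.) -/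
open Complex ComplexConjugate

/-!
Put `u = e^{-iσ₊}`, `v = e^{-iσ₋}` on the unit circle; then `q = u² + v² - 6uv`, `r⁻ = u - v` and
`μ = u⁻¹ N / (-2 (u - v + w))` with `N = v² - u² - 4uv + (u - v) w`. Since `w² ū v̄ = 2 Re (u v̄) - 6`
is negative, `w̄ = -w ū v̄`, so `N̄ = ū² v̄² M` with `M = u² - v² - 4uv + (u - v) w` and `|N| = |M|`.
From `w² = q` one gets `N M = -4uv (u - v + w)²`, hence `|N| = 2 |u - v + w|`; and `u - v + w ≠ 0`,
for otherwise `4uv = 0`.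
-/

lemma mul_conj_eq_one_of_norm_eq_one {z : ℂ} (hz : ‖z‖ = 1) : z * conj z = 1 := by
  rw [mul_conj', hz]; norm_num

lemma sub_add_ne_zero_of_sq_eq {u v w : ℂ} (hu : u ≠ 0) (hv : v ≠ 0)
    (hw : w ^ 2 = u ^ 2 + v ^ 2 - 6 * u * v) : u - v + w ≠ 0 := by
  intro h
  have : 4 * u * v = 0 := by linear_combination hw + (u - v - w) * h
  simp_all

lemma conj_eq_neg_of_sq_eq {u v w : ℂ} (hu : ‖u‖ = 1) (hv : ‖v‖ = 1)
    (hw : w ^ 2 = u ^ 2 + v ^ 2 - 6 * u * v) : conj w = -(w * conj u * conj v) := by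
  have huu := mul_conj_eq_one_of_norm_eq_one hu
  have hvv := mul_conj_eq_one_of_norm_eq_one hv
  have hsq : conj w ^ 2 = (w * conj u * conj v) ^ 2 := by
    rw [← map_pow, hw]
    simp only [map_sub, map_add, map_mul, map_pow, map_ofNat]
    linear_combination (-(conj u ^ 2 * conj v ^ 2)) * hw
      + (6 * conj u * conj v * v * conj v - conj v ^ 2 * (u * conj u + 1)) * huu
      + (6 * conj u * conj v - conj u ^ 2 * (v * conj v + 1)) * hvv
  refine (sq_eq_sq_iff_eq_or_eq_neg.1 hsq).resolve_left fun h => ?_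
  -- otherwise `‖w‖² = w² ū v̄ = 2 Re (u v̄) - 6 ≤ -4`
  have hnorm : ((‖w‖ ^ 2 : ℝ) : ℂ) = u * conj v + conj (u * conj v) - 6 := by
    push_cast
    rw [← mul_conj', h, map_mul, conj_conj]
    linear_combination conj u * conj v * hw + (u * conj v - 6 * v * conj v) * huu
      + (conj u * v - 6) * hvv
  rw [add_conj, ← ofReal_ofNat, ← ofReal_sub, ofReal_inj] at hnorm
  have hre : (u * conj v).re ≤ 1 := by
    simpa [hu, hv] using re_le_norm (u * conj v)
  nlinarith [sq_nonneg ‖w‖]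

lemma norm_eq_two_mul_norm_of_sq_eq {u v w : ℂ} (hu : ‖u‖ = 1) (hv : ‖v‖ = 1)
    (hw : w ^ 2 = u ^ 2 + v ^ 2 - 6 * u * v) :
    ‖v ^ 2 - u ^ 2 - 4 * u * v + (u - v) * w‖ = 2 * ‖u - v + w‖ := by
  set N := v ^ 2 - u ^ 2 - 4 * u * v + (u - v) * w
  set M := u ^ 2 - v ^ 2 - 4 * u * v + (u - v) * w
  have hu0 : u ≠ 0 := norm_ne_zero_iff.1 (by rw [hu]; exact one_ne_zero)
  have hv0 : v ≠ 0 := norm_ne_zero_iff.1 (by rw [hv]; exact one_ne_zero)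
  have hNM : N * M = -(4 * u * v * (u - v + w) ^ 2) := by
    linear_combination (u + v) ^ 2 * hw
  have hconj : conj N = (u ^ 2 * v ^ 2)⁻¹ * M := by
    have hcu : conj u = u⁻¹ := eq_inv_of_mul_eq_one_right (mul_conj_eq_one_of_norm_eq_one hu)
    have hcv : conj v = v⁻¹ := eq_inv_of_mul_eq_one_right (mul_conj_eq_one_of_norm_eq_one hv)
    simp only [N, M, map_add, map_sub, map_mul, map_pow, map_ofNat,
      conj_eq_neg_of_sq_eq hu hv hw, hcu, hcv]
    field_simp
    ring
  have hNM_norm : ‖N‖ = ‖M‖ := by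
    rw [← RCLike.norm_conj, hconj, norm_mul, norm_inv, norm_mul, norm_pow, norm_pow, hu, hv]
    norm_num
  have hsq : ‖N‖ ^ 2 = (2 * ‖u - v + w‖) ^ 2 := calc
    ‖N‖ ^ 2 = ‖N * M‖ := by rw [norm_mul, ← hNM_norm, sq]
    _ = (2 * ‖u - v + w‖) ^ 2 := by
      rw [hNM, norm_neg, norm_mul, norm_mul, norm_mul, norm_pow, hu, hv]
      norm_num
      ring
  exact (pow_left_inj₀ (norm_nonneg _) (by positivity) two_ne_zero).1 hsq

/-- For `σ₊, σ₋ ∈ ℝ` with `σ̃ = (σ₊ + σ₋)/2`,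
`p = e^{iσ₊}(e^{-2iσ₋} - e^{-2iσ₊} - 4e^{-2iσ̃})`,
`q = e^{-2iσ₋} + e^{-2iσ₊} - 6e^{-2iσ̃}`, `r⁻ = e^{-iσ₊} - e^{-iσ₋}`, and any
square root `w` of `q`, the squared eigenvalue
`μ = (p + e^{iσ₊} r⁻ w)/(2(-r⁻ - w))` of the complete two-phase quantum walk
lies on the unit circle. -/
theorem stmt_15 (σp σm : ℝ) (σt : ℝ) (hσt : σt = (σp + σm) / 2)
    (p q rm : ℂ)
    (hp : p = Complex.exp (Complex.I * (σp : ℂ)) *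
      (Complex.exp (-2 * Complex.I * (σm : ℂ)) -
       Complex.exp (-2 * Complex.I * (σp : ℂ)) -
       4 * Complex.exp (-2 * Complex.I * (σt : ℂ))))
    (hq : q = Complex.exp (-2 * Complex.I * (σm : ℂ)) +
      Complex.exp (-2 * Complex.I * (σp : ℂ)) -
      6 * Complex.exp (-2 * Complex.I * (σt : ℂ)))
    (hrm : rm = Complex.exp (-Complex.I * (σp : ℂ)) -
      Complex.exp (-Complex.I * (σm : ℂ))) :
    ∀ w : ℂ, w ^ 2 = q →
      ‖(p + Complex.exp (Complex.I * (σp : ℂ)) * rm * w) /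
        (2 * (-rm - w))‖ = 1 := by
  intro w hw
  have hnorm (x : ℝ) : ‖exp (-I * x)‖ = 1 := by simp [norm_exp]
  have hsq (x : ℝ) : exp (-2 * I * x) = exp (-I * x) ^ 2 := by
    rw [← exp_nat_mul]; ring_nf
  have hmid : exp (-2 * I * σt) = exp (-I * σp) * exp (-I * σm) := by
    rw [← exp_add, hσt]; push_cast; ring_nf
  have hinv : exp (I * σp) = (exp (-I * σp))⁻¹ := by
    rw [← exp_neg]; ring_nf
  set u := exp (-I * σp)
  set v := exp (-I * σm)
  rw [hsq, hsq, hmid] at hp hq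
  rw [hinv] at hp ⊢
  subst hp hq hrm
  have hu0 : u ≠ 0 := exp_ne_zero _
  have hv0 : v ≠ 0 := exp_ne_zero _
  have hw' : w ^ 2 = u ^ 2 + v ^ 2 - 6 * u * v := by linear_combination hw
  have hD := sub_add_ne_zero_of_sq_eq hu0 hv0 hw'
  rw [show u⁻¹ * (v ^ 2 - u ^ 2 - 4 * (u * v)) + u⁻¹ * (u - v) * w
      = u⁻¹ * (v ^ 2 - u ^ 2 - 4 * u * v + (u - v) * w) by ring,
    show 2 * (-(u - v) - w) = -(2 * (u - v + w)) by ring,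
    norm_div, norm_mul, norm_inv, hnorm, norm_eq_two_mul_norm_of_sq_eq (hnorm _) (hnorm _) hw',
    norm_neg, norm_mul, Complex.norm_two, inv_one, one_mul]
  exact div_self (mul_ne_zero two_ne_zero (norm_ne_zero_iff.2 hD))
end
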